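/- arXiv:1702.05581 — 6 statements merged into one kernel-verified Lean document; each statement's English description precedes it below -/
import Mathlib

section
/- If 0 ≤ x ≤ 1 - 1/e, then for any real d ≥ 1, (1 - x/d)^(d/2) ≥ e^(-x) ≥ 1/2. -/
theorem stmt_0 (x d : ℝ) (hx0 : 0 ≤ x) (hx1 : x ≤ 1 - 1 / Real.exp 1)
    (hd : 1 ≤ d) :
    (1 - x / d) ^ (d / 2) ≥ Real.exp (-x) ∧ Real.exp (-x) ≥ 1 / 2 := by
  have hepos : (0:ℝ) < Real.exp 1 := Real.exp_pos 1
  have he : (2:ℝ) ≤ Real.exp 1 := by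
    have := Real.add_one_le_exp (1:ℝ); linarith
  have hinv : 1 / Real.exp 1 ≤ 1/2 := by
    rw [div_le_div_iff₀ hepos (by norm_num)]; linarith
  have hd0 : (0:ℝ) < d := by linarith
  set t := x / d with ht
  have ht0 : 0 ≤ t := div_nonneg hx0 hd0.le
  set a := 1 - 1 / Real.exp 1 with hadef
  have ha : (0:ℝ) < a := by simp only [hadef]; linarith
  have hta : t ≤ a := le_trans (div_le_self hx0 hd) hx1
  have key : Real.log (1 - t) ≥ -(t / a) := by
    have hcc := strictConcaveOn_log_Ioi.concaveOn.2
      (Set.mem_Ioi.2 (by positivity : (0:ℝ) < 1 / Real.exp 1))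
      (Set.mem_Ioi.2 (by norm_num : (0:ℝ) < 1))
      (show 0 ≤ t / a from div_nonneg ht0 ha.le)
      (show 0 ≤ 1 - t / a by
        have : t / a ≤ 1 := (div_le_one ha).2 hta
        linarith)
      (by ring)
    have hcomb : (t / a) • (1 / Real.exp 1) + (1 - t / a) • (1:ℝ) = 1 - t := by
      have h1e : 1 / Real.exp 1 = 1 - a := by simp [hadef]
      have hdiv : t / a * a = t := div_mul_cancel₀ t ha.ne'
      simp only [smul_eq_mul, h1e]
      linear_combination -hdiv
    rw [hcomb] at hcc
    have hlog : Real.log (1 / Real.exp 1) = -1 := by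
      rw [Real.log_div one_ne_zero (Real.exp_ne_zero 1), Real.log_one, Real.log_exp]; ring
    rw [hlog, Real.log_one] at hcc
    simp only [smul_eq_mul, mul_zero, add_zero, mul_neg_one] at hcc
    linarith
  have hlog2 : Real.log (1 - t) ≥ -(2 * t) := by
    have h2a : 1 ≤ 2 * a := by simp only [hadef]; linarith
    have : t / a ≤ 2 * t := by
      rw [div_le_iff₀ ha]; nlinarith
    linarith
  have h1t : 0 < 1 - t := by
    have h0 : (0:ℝ) < 1 / Real.exp 1 := by positivity
    simp only [hadef] at hta; linarith
  constructor
  · rw [ge_iff_le, ← Real.log_le_log_iff (Real.exp_pos _) (Real.rpow_pos_of_pos h1t _),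
      Real.log_exp, Real.log_rpow h1t]
    have h1 : -(2 * t) * (d / 2) ≤ Real.log (1 - t) * (d / 2) := by
      apply mul_le_mul_of_nonneg_right hlog2; positivity
    have h2 : -x = -(2 * t) * (d/2) := by
      simp only [ht]; field_simp
    linarith
  · rw [ge_iff_le, ← Real.exp_log (by norm_num : (0:ℝ) < 1/2), Real.exp_le_exp]
    have hlh : Real.log (1/2) = -Real.log 2 := by
      rw [Real.log_div one_ne_zero two_ne_zero, Real.log_one]; ring
    rw [hlh]
    have h2 : (0.6931471803:ℝ) < Real.log 2 := Real.log_two_gt_d9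
    have hee : Real.exp 1 < 3 := by
      have := Real.exp_one_lt_d9; linarith
    have hinv2 : (1:ℝ) / 3 < 1 / Real.exp 1 :=
      one_div_lt_one_div_of_lt hepos hee
    have hx' : x ≤ 1 - 1 / 3 := by
      have := hx1; simp only [hadef] at this; linarith
    have h23 : (1:ℝ) - 1/3 ≤ 0.6931471803 := by norm_num
    linarith
end

section
/- For every real d ≥ 3, the Beta function satisfies 2/√(d-1) ≤ B(1/2, d/2) ≤ π/√d. -/
/-- The Beta function, defined as `∫₀¹ (1-t)^(x-1) t^(y-1) dt`. -/
noncomputable def Beta (x y : ℝ) : ℝ :=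
  ∫ t in (0:ℝ)..1, (1 - t) ^ (x - 1) * t ^ (y - 1)

open Real in
lemma Beta_eq_Gamma (x y : ℝ) (hx : 0 < x) (hy : 0 < y) :
    Beta x y = Real.Gamma x * Real.Gamma y / Real.Gamma (x + y) := by
  have key : Complex.Gamma y * Complex.Gamma x
      = Complex.Gamma (y + x) * Complex.betaIntegral y x :=
    Complex.Gamma_mul_Gamma_eq_betaIntegral (by simpa using hy) (by simpa using hx)
  have hbeta : Complex.betaIntegral (y : ℂ) (x : ℂ) = (Beta x y : ℂ) := by
    rw [Complex.betaIntegral, Beta, ← intervalIntegral.integral_ofReal]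
    refine intervalIntegral.integral_congr fun t ht => ?_
    rw [Set.uIcc_of_le (by norm_num : (0:ℝ) ≤ 1)] at ht
    rw [Complex.ofReal_mul, Complex.ofReal_cpow (by linarith [ht.2] : (0:ℝ) ≤ 1 - t),
      Complex.ofReal_cpow ht.1]
    push_cast
    ring
  rw [hbeta] at key
  have hG : ∀ z : ℝ, 0 < z → Real.Gamma z ≠ 0 := fun z hz =>
    (Real.Gamma_pos_of_pos hz).ne'
  have key' : Real.Gamma y * Real.Gamma x = Real.Gamma (y + x) * Beta x y := by
    have := key
    rw [← Complex.ofReal_add, Complex.Gamma_ofReal, Complex.Gamma_ofReal,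
      Complex.Gamma_ofReal, ← Complex.ofReal_mul, ← Complex.ofReal_mul] at this
    exact_mod_cast this
  rw [add_comm x y]
  field_simp [hG _ (by linarith : (0:ℝ) < y + x)]
  linarith [key']

open Real in
lemma wendel_upper {x : ℝ} (hx : 0 < x) :
    Real.Gamma (x + 1 / 2) ≤ Real.Gamma x * Real.sqrt x := by
  have hconv := Real.convexOn_log_Gamma
  have h := hconv.2 (Set.mem_Ioi.2 hx) (Set.mem_Ioi.2 (by linarith : (0:ℝ) < x + 1))
    (by norm_num : (0:ℝ) ≤ 1/2) (by norm_num : (0:ℝ) ≤ 1/2) (by norm_num)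
  have hcomb : (1/2 : ℝ) • x + (1/2 : ℝ) • (x + 1) = x + 1/2 := by
    simp [smul_eq_mul]; ring
  rw [hcomb] at h
  simp only [Function.comp, smul_eq_mul] at h
  rw [Real.Gamma_add_one hx.ne'] at h
  have hGx : 0 < Real.Gamma x := Real.Gamma_pos_of_pos hx
  rw [Real.log_mul hx.ne' hGx.ne'] at h
  have h2 : Real.log (Real.Gamma (x + 1/2))
      ≤ Real.log (Real.Gamma x * Real.sqrt x) := by
    rw [Real.log_mul hGx.ne' (Real.sqrt_pos.2 hx).ne', Real.log_sqrt hx.le]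
    linarith
  have := Real.exp_le_exp.2 h2
  rwa [Real.exp_log (Real.Gamma_pos_of_pos (by linarith)),
    Real.exp_log (by positivity)] at this

theorem stmt_3 (d : ℝ) (hd : 3 ≤ d) :
    2 / Real.sqrt (d - 1) ≤ Beta (1 / 2) (d / 2) ∧
      Beta (1 / 2) (d / 2) ≤ Real.pi / Real.sqrt d := by
  have hx : (0:ℝ) < d / 2 := by linarith
  have hBeta : Beta (1/2) (d/2)
      = Real.sqrt Real.pi * Real.Gamma (d/2) / Real.Gamma (d/2 + 1/2) := by
    rw [Beta_eq_Gamma _ _ (by norm_num) hx, Real.Gamma_one_half_eq, add_comm]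
  have hGx : 0 < Real.Gamma (d/2) := Real.Gamma_pos_of_pos hx
  have hGxh : 0 < Real.Gamma (d/2 + 1/2) := Real.Gamma_pos_of_pos (by linarith)
  have hpi : 3 < Real.pi := Real.pi_gt_three
  have hsd : 0 < Real.sqrt d := Real.sqrt_pos.2 (by linarith)
  have hsd1 : 0 < Real.sqrt (d - 1) := Real.sqrt_pos.2 (by linarith)
  constructor
  · -- lower bound: uses Γ(x+1/2) ≤ Γ(x) √x
    have hW := wendel_upper hx
    -- Beta ≥ √π / √(d/2)
    have h1 : Real.sqrt Real.pi / Real.sqrt (d/2)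
        ≤ Beta (1/2) (d/2) := by
      rw [hBeta]
      rw [div_le_div_iff₀ (Real.sqrt_pos.2 hx) hGxh]
      calc Real.sqrt Real.pi * Real.Gamma (d/2 + 1/2)
          ≤ Real.sqrt Real.pi * (Real.Gamma (d/2) * Real.sqrt (d/2)) := by
            exact mul_le_mul_of_nonneg_left hW (Real.sqrt_nonneg _)
        _ = Real.sqrt Real.pi * Real.Gamma (d/2) * Real.sqrt (d/2) := by ring
    refine le_trans ?_ h1
    -- 2 / √(d-1) ≤ √π / √(d/2)  ⟺  2 √(d/2) ≤ √π √(d-1)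
    rw [div_le_div_iff₀ hsd1 (Real.sqrt_pos.2 hx)]
    have : 2 * Real.sqrt (d/2) = Real.sqrt (4 * (d/2)) := by
      rw [show (4:ℝ) * (d/2) = 2^2 * (d/2) by ring, Real.sqrt_mul (by positivity),
        Real.sqrt_sq (by norm_num)]
    rw [this, ← Real.sqrt_mul (by positivity)]
    apply Real.sqrt_le_sqrt
    nlinarith
  · -- upper bound: uses x Γ(x) = Γ(x+1) ≤ Γ(x+1/2) √(x+1/2)
    have hW := wendel_upper (show (0:ℝ) < d/2 + 1/2 by linarith)
    rw [show d/2 + 1/2 + 1/2 = d/2 + 1 by ring, Real.Gamma_add_one hx.ne'] at hW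
    -- Beta ≤ √π √(d/2+1/2) / (d/2)
    have h1 : Beta (1/2) (d/2)
        ≤ Real.sqrt Real.pi * Real.sqrt (d/2 + 1/2) / (d/2) := by
      rw [hBeta, div_le_div_iff₀ hGxh hx]
      calc Real.sqrt Real.pi * Real.Gamma (d/2) * (d/2)
          = Real.sqrt Real.pi * (d/2 * Real.Gamma (d/2)) := by ring
        _ ≤ Real.sqrt Real.pi * (Real.Gamma (d/2 + 1/2) * Real.sqrt (d/2 + 1/2)) :=
            mul_le_mul_of_nonneg_left hW (Real.sqrt_nonneg _)
        _ = Real.sqrt Real.pi * Real.sqrt (d/2 + 1/2) * Real.Gamma (d/2 + 1/2) := by ring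
    refine h1.trans ?_
    -- √π √((d+1)/2) / (d/2) ≤ π/√d
    rw [div_le_div_iff₀ hx hsd]
    rw [← Real.sqrt_mul Real.pi_pos.le, ← Real.sqrt_mul (by positivity : (0:ℝ) ≤ Real.pi * (d/2+1/2))]
    have hπ : Real.pi = Real.sqrt (Real.pi ^ 2) := (Real.sqrt_sq Real.pi_pos.le).symm
    calc Real.sqrt (Real.pi * (d/2 + 1/2) * d)
        ≤ Real.sqrt (Real.pi ^ 2 * (d/2) ^ 2) := by
          apply Real.sqrt_le_sqrt
          have h2 : d + 1 ≤ Real.pi * d / 2 := by nlinarith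
          nlinarith [h2, mul_pos Real.pi_pos (show (0:ℝ) < d by linarith)]
      _ = Real.pi * (d/2) := by
          rw [Real.sqrt_mul (by positivity), Real.sqrt_sq Real.pi_pos.le,
            Real.sqrt_sq hx.le]
end

section
/- For any two unit vectors v₁, v₂ ∈ S^{d-1}, if X is uniformly distributed on the unit sphere S^{d-1} ⊆ ℝ^d (d ≥ 2), then P[sign(v₁ · X) ≠ sign(v₂ · X)] = θ(v₁, v₂)/π, where θ(v₁, v₂) = arccos(v₁ · v₂). -/
/-!
Two pairs of unit vectors with the same inner product are exchanged by a product of two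
reflections, so by rotation invariance `P[sign(v₁ · X) ≠ sign(v₂ · X)]` is a function `G θ` of
the angle `θ` alone. Put `u θ = cos θ • e₁ + sin θ • e₂` for an orthonormal pair `e₁, e₂`. As
`sign` takes only two values, the event for `(u 0, u (a + b))` is the symmetric difference of the
events for `(u 0, u a)` and `(u a, u (a + b))`; for `a, b > 0` these two events meet only where
`X ⊥ e₁`, because `sin b • u 0 + sin a • u (a + b) = sin (a + b) • u a`. Hyperplanes are null:
for a finite rotation-invariant measure with no atom at `0`, a proper subspace `V` has infinitely
many copies of the same dimension (images under transvections) meeting pairwise in a smaller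
subspace, so `μ V = 0` by induction on the dimension. Hence `G` is additive on `[0, π]`,
nonnegative, and `G π = 1`, which forces `G θ = θ / π`.
-/

open MeasureTheory
open scoped RealInnerProductSpace

/-- The uniform (rotation-invariant) probability distribution on the unit sphere
`S^{d-1} ⊆ ℝ^d`: a probability measure concentrated on the unit sphere that is
invariant under every linear isometry of `ℝ^d`. -/
def IsUniformOnSphere {d : ℕ} (μ : Measure (EuclideanSpace ℝ (Fin d))) : Prop :=
  IsProbabilityMeasure μ ∧ μ {x | ‖x‖ = 1}ᶜ = 0 ∧
    ∀ f : EuclideanSpace ℝ (Fin d) ≃ₗᵢ[ℝ] EuclideanSpace ℝ (Fin d),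
      Measure.map (⇑f) μ = μ

/-- `sign(t) = +1` if `t ≥ 0` and `-1` otherwise. -/
noncomputable def rsign (t : ℝ) : ℝ := if 0 ≤ t then 1 else -1

open Module Function Real
open scoped symmDiff

theorem measurable_rsign : Measurable rsign :=
  Measurable.ite measurableSet_Ici measurable_const measurable_const

theorem rsign_ne_rsign_neg_iff (t : ℝ) : rsign t ≠ rsign (-t) ↔ t ≠ 0 := by
  unfold rsign
  rcases lt_trichotomy t 0 with h | rfl | h
  · norm_num [h.ne, h.not_ge, h.le]
  · simp
  · norm_num [h.ne', h.le, h.not_ge]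

theorem rsign_eq_or_rsign_eq_of_add_eq {α β γ p q r : ℝ} (hα : 0 < α) (hβ : 0 < β)
    (hγ : 0 ≤ γ) (h : α * p + β * r = γ * q) (hp : p ≠ 0) :
    rsign p = rsign q ∨ rsign q = rsign r := by
  unfold rsign
  rcases hp.lt_or_gt with hp | hp <;> split_ifs <;> first | simp | nlinarith

theorem map_nat_mul_of_map_add {g : ℝ → ℝ} {L : ℝ} (h0 : g 0 = 0)
    (hadd : ∀ a b, 0 ≤ a → 0 ≤ b → a + b ≤ L → g (a + b) = g a + g b) {t : ℝ} (ht : 0 ≤ t) :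
    ∀ n : ℕ, n * t ≤ L → g (n * t) = n * g t
  | 0, _ => by simp [h0]
  | n + 1, hn => by
    push_cast at hn ⊢
    rw [add_one_mul] at hn ⊢
    rw [hadd _ _ (by positivity) ht hn, map_nat_mul_of_map_add h0 hadd ht n (by linarith)]
    ring

theorem map_nat_div_mul_of_map_add {g : ℝ → ℝ} {L : ℝ} (h0 : g 0 = 0) (hgL : g L = 1)
    (hadd : ∀ a b, 0 ≤ a → 0 ≤ b → a + b ≤ L → g (a + b) = g a + g b) (hL : 0 ≤ L)
    {n k : ℕ} (hn : 0 < n) (hk : k ≤ n) : g (k / n * L) = k / n := by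
  have hn' : (0 : ℝ) < n := by exact_mod_cast hn
  have hmul : ∀ m : ℕ, m ≤ n → g (m / n * L) = m * g (L / n) := by
    intro m hm
    rw [div_mul_eq_mul_div, mul_div_assoc]
    refine map_nat_mul_of_map_add h0 hadd (by positivity) m ?_
    rw [← mul_div_assoc, div_le_iff₀ hn', mul_comm L]
    gcongr
  have hunit : g (L / n) = 1 / n := by
    have := hmul n le_rfl
    rw [div_self hn'.ne', one_mul, hgL] at this
    field_simp
    linarith
  rw [hmul k hk, hunit, mul_one_div]

theorem eq_div_of_map_add_of_nonneg {g : ℝ → ℝ} {L : ℝ} (hL : 0 < L) (h0 : g 0 = 0)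
    (hgL : g L = 1) (hnonneg : ∀ t, 0 ≤ t → 0 ≤ g t)
    (hadd : ∀ a b, 0 < a → 0 < b → a + b ≤ L → g (a + b) = g a + g b)
    {θ : ℝ} (hθ₀ : 0 ≤ θ) (hθL : θ ≤ L) : g θ = θ / L := by
  have hadd' : ∀ a b, 0 ≤ a → 0 ≤ b → a + b ≤ L → g (a + b) = g a + g b := by
    intro a b ha hb hab
    rcases ha.eq_or_lt with rfl | ha
    · simp [h0]
    rcases hb.eq_or_lt with rfl | hb
    · simp [h0]
    exact hadd a b ha hb hab
  have hmono : ∀ a b, 0 ≤ a → a ≤ b → b ≤ L → g a ≤ g b := by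
    intro a b ha hab hb
    have := hadd' a (b - a) ha (by linarith) (by linarith)
    rw [add_sub_cancel] at this
    linarith [hnonneg (b - a) (by linarith)]
  rcases hθL.eq_or_lt with rfl | hθL
  · rw [hgL, div_self hL.ne']
  -- squeeze `θ / L` and `g θ` between consecutive multiples of `1 / N`
  set x := θ / L
  have hθx : θ = x * L := (div_mul_cancel₀ θ hL.ne').symm
  have hx₁ : x < 1 := (div_lt_one hL).mpr hθL
  refine eq_of_forall_dist_le fun ε hε => ?_
  obtain ⟨N, hN₀, hNε⟩ : ∃ N : ℕ, 0 < N ∧ 1 / (N : ℝ) < ε := by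
    obtain ⟨n, hn⟩ := exists_nat_one_div_lt hε
    exact ⟨n + 1, n.succ_pos, by exact_mod_cast hn⟩
  have hN : (0 : ℝ) < N := by exact_mod_cast hN₀
  set k := ⌊x * N⌋₊
  have hk₁ : k / N ≤ x := (div_le_iff₀ hN).mpr (Nat.floor_le (by positivity))
  have hk₂ : x < (k + 1) / N := (lt_div_iff₀ hN).mpr (Nat.lt_floor_add_one _)
  have hkN : k + 1 ≤ N := by
    have : (k : ℝ) < N := by rw [← div_lt_one hN]; exact hk₁.trans_lt hx₁
    exact_mod_cast this
  have hlow := hmono (k / N * L) θ (by positivity) (by rw [hθx]; gcongr) hθL.le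
  have hup := hmono θ ((k + 1 : ℕ) / N * L) hθ₀ (by rw [hθx]; push_cast; gcongr)
    (mul_le_of_le_one_left hL.le ((div_le_one hN).mpr (by exact_mod_cast hkN)))
  rw [map_nat_div_mul_of_map_add h0 hgL hadd' hL.le hN₀ (by omega)] at hlow
  rw [map_nat_div_mul_of_map_add h0 hgL hadd' hL.le hN₀ hkN] at hup
  push_cast at hup
  rw [add_div] at hk₂ hup
  rw [Real.dist_eq, abs_le]
  constructor <;> linarith

theorem MeasureTheory.measure_eq_zero_of_pairwise_aedisjoint {α : Type*} [MeasurableSpace α]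
    {μ : Measure α} [IsFiniteMeasure μ] {A : ℕ → Set α} {c : ENNReal}
    (hA : ∀ n, NullMeasurableSet (A n) μ) (hc : ∀ n, μ (A n) = c)
    (hd : Pairwise (AEDisjoint μ on A)) : c = 0 := by
  by_contra hc0
  have := measure_iUnion₀ hd hA
  simp only [hc, ENNReal.tsum_const_eq_top_of_ne_zero hc0] at this
  exact measure_ne_top μ _ this

theorem MeasureTheory.AEDisjoint.measure_symmDiff {α : Type*} [MeasurableSpace α]
    {μ : Measure α} {s t : Set α} (hd : AEDisjoint μ s t) (ht : NullMeasurableSet t μ) :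
    μ (s ∆ t) = μ s + μ t := by
  rw [symmDiff_eq_sup_sdiff_inf]
  change μ ((s ∪ t) \ (s ∩ t)) = _
  rw [measure_sdiff_null hd, measure_union₀ ht hd]

section InnerProductSpace

variable {E : Type*} [NormedAddCommGroup E] [InnerProductSpace ℝ E]

theorem exists_linearIsometryEquiv_apply_eq_pair {u₁ u₂ v₁ v₂ : E} (h₁ : ‖u₁‖ = ‖v₁‖)
    (h₂ : ‖u₂‖ = ‖v₂‖) (h : ⟪u₁, u₂⟫ = ⟪v₁, v₂⟫) :
    ∃ f : E ≃ₗᵢ[ℝ] E, f u₁ = v₁ ∧ f u₂ = v₂ := by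
  set ρ₁ := (ℝ ∙ (u₁ - v₁))ᗮ.reflection
  have hρ₁ : ρ₁ u₁ = v₁ := Submodule.reflection_sub h₁
  set ρ₂ := (ℝ ∙ (ρ₁ u₂ - v₂))ᗮ.reflection
  have hρ₂ : ρ₂ (ρ₁ u₂) = v₂ :=
    Submodule.reflection_sub (by rw [LinearIsometryEquiv.norm_map, h₂])
  have hv₁ : ρ₂ v₁ = v₁ := by
    have : ⟪ρ₁ u₂, v₁⟫ = ⟪v₂, v₁⟫ := by
      rw [← hρ₁, LinearIsometryEquiv.inner_map_map, real_inner_comm, h, hρ₁, real_inner_comm]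
    refine Submodule.reflection_mem_subspace_eq_self ?_
    rw [Submodule.mem_orthogonal_singleton_iff_inner_right, inner_sub_left, this, sub_self]
  exact ⟨ρ₁.trans ρ₂, by simp [hρ₁, hv₁], hρ₂⟩

theorem map_transvection_inter_map_transvection_subset {V : Submodule ℝ E} {v w : E}
    (hw : w ∈ Vᗮ) (hw₀ : w ≠ 0) {s t : ℝ} (hst : s ≠ t) :
    (V.map (LinearMap.transvection (innerₗ E v) (s • w)) : Set E) ∩
        V.map (LinearMap.transvection (innerₗ E v) (t • w)) ⊆ V ⊓ (ℝ ∙ v)ᗮ := by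
  rintro _ ⟨⟨y, hy, rfl⟩, ⟨z, hz, hyz⟩⟩
  simp only [LinearMap.transvection.apply, innerₗ_apply_apply] at hyz ⊢
  have hdiff : z - y = (⟪v, y⟫ * s - ⟪v, z⟫ * t) • w := by
    linear_combination (norm := module) hyz
  obtain rfl : z = y := sub_eq_zero.mp <| (Submodule.orthogonal_disjoint V).le_bot
    ⟨V.sub_mem hz hy, hdiff ▸ Vᗮ.smul_mem _ hw⟩
  have hvz : ⟪v, z⟫ = 0 := by
    rw [sub_self, eq_comm, smul_eq_zero, ← mul_sub] at hdiff
    simpa [hw₀, sub_eq_zero, hst] using hdiff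
  rw [hvz, zero_smul, add_zero]
  exact ⟨hz, Submodule.mem_orthogonal_singleton_iff_inner_right.mpr hvz⟩

def signDisagreement (v₁ v₂ : E) : Set E := {x | rsign ⟪v₁, x⟫ ≠ rsign ⟪v₂, x⟫}

@[simp]
theorem signDisagreement_self (v : E) : signDisagreement v v = ∅ := by
  simp [signDisagreement]

theorem signDisagreement_neg (v : E) : signDisagreement v (-v) = ((ℝ ∙ v)ᗮ : Set E)ᶜ := by
  ext x
  simp [signDisagreement, inner_neg_left, rsign_ne_rsign_neg_iff,
    Submodule.mem_orthogonal_singleton_iff_inner_right]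

theorem symmDiff_signDisagreement (u v w : E) :
    signDisagreement u v ∆ signDisagreement v w = signDisagreement u w := by
  ext x
  simp only [Set.mem_symmDiff, signDisagreement, Set.mem_ofPred_eq, rsign]
  split_ifs <;> norm_num

theorem preimage_signDisagreement (f : E ≃ₗᵢ[ℝ] E) (v₁ v₂ : E) :
    f ⁻¹' signDisagreement (f v₁) (f v₂) = signDisagreement v₁ v₂ := by
  ext x
  simp [signDisagreement]

theorem signDisagreement_inter_subset {u v w : E} {α β γ : ℝ} (hα : 0 < α) (hβ : 0 < β)
    (hγ : 0 ≤ γ) (h : α • u + β • w = γ • v) :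
    signDisagreement u v ∩ signDisagreement v w ⊆ (ℝ ∙ u)ᗮ := by
  rintro x ⟨huv, hvw⟩
  rw [SetLike.mem_coe, Submodule.mem_orthogonal_singleton_iff_inner_right]
  by_contra hu
  have hx : α * ⟪u, x⟫ + β * ⟪w, x⟫ = γ * ⟪v, x⟫ := by
    rw [← real_inner_smul_left, ← real_inner_smul_left, ← inner_add_left, h,
      real_inner_smul_left]
  exact (rsign_eq_or_rsign_eq_of_add_eq hα hβ hγ hx hu).elim huv hvw

variable [MeasurableSpace E] [OpensMeasurableSpace E] {μ : Measure E}

theorem measurableSet_signDisagreement (v₁ v₂ : E) : MeasurableSet (signDisagreement v₁ v₂) :=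
  have hv : ∀ v : E, Measurable fun x => rsign ⟪v, x⟫ := fun _ =>
    measurable_rsign.comp (continuous_const.inner continuous_id).measurable
  (measurableSet_eq_fun (hv v₁) (hv v₂)).compl

theorem measure_signDisagreement_congr (hμ : ∀ f : E ≃ₗᵢ[ℝ] E, MeasurePreserving f μ μ)
    {u₁ u₂ v₁ v₂ : E} (h₁ : ‖u₁‖ = ‖v₁‖) (h₂ : ‖u₂‖ = ‖v₂‖) (h : ⟪u₁, u₂⟫ = ⟪v₁, v₂⟫) :
    μ (signDisagreement u₁ u₂) = μ (signDisagreement v₁ v₂) := by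
  obtain ⟨f, rfl, rfl⟩ := exists_linearIsometryEquiv_apply_eq_pair h₁ h₂ h
  rw [← preimage_signDisagreement f,
    (hμ f).measure_preimage (measurableSet_signDisagreement _ _).nullMeasurableSet]

end InnerProductSpace

section FiniteDimensional

variable {E : Type*} [NormedAddCommGroup E] [InnerProductSpace ℝ E] [FiniteDimensional ℝ E]

theorem Submodule.exists_linearIsometryEquiv_image_eq {V W : Submodule ℝ E}
    (h : finrank ℝ V = finrank ℝ W) : ∃ f : E ≃ₗᵢ[ℝ] E, f '' V = W := by
  let e : V ≃ₗᵢ[ℝ] W := (stdOrthonormalBasis ℝ V).equiv (stdOrthonormalBasis ℝ W) (finCongr h)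
  let L : V →ₗᵢ[ℝ] E := W.subtypeₗᵢ.comp e.toLinearIsometry
  have hL : ∀ y : V, L.extend y = e y := L.extend_apply
  refine ⟨L.extend.toLinearIsometryEquiv rfl, Set.Subset.antisymm ?_ fun x hx => ?_⟩
  · rintro _ ⟨y, hy, rfl⟩
    exact (hL ⟨y, hy⟩).symm ▸ (e ⟨y, hy⟩).2
  · exact ⟨e.symm ⟨x, hx⟩, (e.symm ⟨x, hx⟩).2, by simp [hL]⟩

variable [MeasurableSpace E] [OpensMeasurableSpace E] {μ : Measure E}

theorem measure_submodule_eq_of_finrank_eq (hμ : ∀ f : E ≃ₗᵢ[ℝ] E, MeasurePreserving f μ μ)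
    {V W : Submodule ℝ E} (h : finrank ℝ V = finrank ℝ W) : μ V = μ W := by
  obtain ⟨f, hf⟩ := Submodule.exists_linearIsometryEquiv_image_eq h
  rw [← hf, f.image_eq_preimage_symm,
    (hμ f.symm).measure_preimage V.closed_of_finiteDimensional.measurableSet.nullMeasurableSet]

theorem measure_submodule_eq_zero [IsFiniteMeasure μ]
    (hμ : ∀ f : E ≃ₗᵢ[ℝ] E, MeasurePreserving f μ μ) (h0 : μ {0} = 0)
    {V : Submodule ℝ E} (hV : V ≠ ⊤) : μ V = 0 := by
  induction hn : finrank ℝ V using Nat.strong_induction_on generalizing V with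
  | _ n ih =>
    rcases eq_or_ne V ⊥ with rfl | hV0
    · simpa using h0
    obtain ⟨v, hvV, hv⟩ := V.exists_mem_ne_zero_of_ne_bot hV0
    obtain ⟨w, hwV, hw⟩ :=
      Vᗮ.exists_mem_ne_zero_of_ne_bot (Submodule.orthogonal_eq_bot_iff.not.mpr hV)
    set U := V ⊓ (ℝ ∙ v)ᗮ
    have hUV : U < V := by
      refine lt_of_le_of_ne inf_le_left fun hUV => hv ?_
      have : v ∈ (ℝ ∙ v)ᗮ := (hUV ▸ hvV : v ∈ U).2
      rwa [Submodule.mem_orthogonal_singleton_iff_inner_right, inner_self_eq_zero] at this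
    have hU : μ U = 0 :=
      ih _ (hn ▸ Submodule.finrank_lt_finrank_of_lt hUV) (ne_top_of_lt (hUV.trans_le le_top)) rfl
    have hvw : ∀ t : ℝ, innerₗ E v (t • w) = 0 := fun t => by
      simp [Submodule.inner_right_of_mem_orthogonal hvV hwV]
    let A : ℕ → Submodule ℝ E := fun k => V.map (LinearMap.transvection (innerₗ E v) ((k : ℝ) • w))
    have hAV : ∀ k, μ (A k) = μ V := fun k =>
      measure_submodule_eq_of_finrank_eq hμ ((LinearEquiv.transvection (hvw k)).finrank_map_eq V)
    exact measure_eq_zero_of_pairwise_aedisjoint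
      (fun k => (A k).closed_of_finiteDimensional.measurableSet.nullMeasurableSet) hAV
      fun k l hkl => measure_mono_null
        (map_transvection_inter_map_transvection_subset hwV hw (Nat.cast_injective.ne hkl)) hU

theorem measure_orthogonal_span_singleton_eq_zero [IsFiniteMeasure μ]
    (hμ : ∀ f : E ≃ₗᵢ[ℝ] E, MeasurePreserving f μ μ) (h0 : μ {0} = 0) {v : E} (hv : v ≠ 0) :
    μ (ℝ ∙ v)ᗮ = 0 :=
  measure_submodule_eq_zero hμ h0
    (by rwa [Ne, Submodule.orthogonal_eq_top_iff, Submodule.span_singleton_eq_bot])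

theorem measure_signDisagreement_neg [IsProbabilityMeasure μ]
    (hμ : ∀ f : E ≃ₗᵢ[ℝ] E, MeasurePreserving f μ μ) (h0 : μ {0} = 0) {v : E} (hv : v ≠ 0) :
    μ (signDisagreement v (-v)) = 1 := by
  rw [signDisagreement_neg,
    prob_compl_eq_one_sub (Submodule.closed_of_finiteDimensional _).measurableSet,
    measure_orthogonal_span_singleton_eq_zero hμ h0 hv, tsub_zero]

end FiniteDimensional

section Plane

variable {E : Type*} [NormedAddCommGroup E] [InnerProductSpace ℝ E]

noncomputable def planeDir (e₁ e₂ : E) (θ : ℝ) : E := cos θ • e₁ + sin θ • e₂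

@[simp]
theorem planeDir_zero (e₁ e₂ : E) : planeDir e₁ e₂ 0 = e₁ := by
  simp [planeDir]

theorem planeDir_pi (e₁ e₂ : E) : planeDir e₁ e₂ π = -e₁ := by
  simp [planeDir]

theorem sin_smul_add_sin_smul_planeDir (e₁ e₂ : E) (a b : ℝ) :
    sin b • e₁ + sin a • planeDir e₁ e₂ (a + b) = sin (a + b) • planeDir e₁ e₂ a := by
  simp only [planeDir, cos_add, sin_add]
  linear_combination (norm := module) (-sin b • sin_sq_add_cos_sq a) • e₁

variable {e₁ e₂ : E} (he₁ : ‖e₁‖ = 1) (he₂ : ‖e₂‖ = 1) (he : ⟪e₁, e₂⟫ = 0)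
include he₁ he₂ he

theorem inner_planeDir_planeDir (s t : ℝ) :
    ⟪planeDir e₁ e₂ s, planeDir e₁ e₂ t⟫ = cos (t - s) := by
  simp only [planeDir, inner_add_left, inner_add_right, real_inner_smul_left,
    real_inner_smul_right, real_inner_self_eq_norm_sq, he₁, he₂, he, real_inner_comm e₁ e₂,
    cos_sub]
  ring

theorem inner_planeDir (θ : ℝ) : ⟪e₁, planeDir e₁ e₂ θ⟫ = cos θ := by
  simpa using inner_planeDir_planeDir he₁ he₂ he 0 θ

theorem norm_planeDir (θ : ℝ) : ‖planeDir e₁ e₂ θ‖ = 1 := by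
  have := inner_planeDir_planeDir he₁ he₂ he θ θ
  rwa [sub_self, cos_zero, real_inner_self_eq_norm_sq,
    pow_eq_one_iff_of_nonneg (norm_nonneg _) two_ne_zero] at this

variable [FiniteDimensional ℝ E] [MeasurableSpace E] [OpensMeasurableSpace E] {μ : Measure E}
  [IsProbabilityMeasure μ] (hμ : ∀ f : E ≃ₗᵢ[ℝ] E, MeasurePreserving f μ μ) (h0 : μ {0} = 0)
include hμ h0

theorem measure_signDisagreement_planeDir_add {a b : ℝ} (ha : 0 < a) (hb : 0 < b)
    (hab : a + b ≤ π) :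
    μ (signDisagreement e₁ (planeDir e₁ e₂ (a + b))) =
      μ (signDisagreement e₁ (planeDir e₁ e₂ a)) + μ (signDisagreement e₁ (planeDir e₁ e₂ b)) := by
  have hnull : AEDisjoint μ (signDisagreement e₁ (planeDir e₁ e₂ a))
      (signDisagreement (planeDir e₁ e₂ a) (planeDir e₁ e₂ (a + b))) :=
    measure_mono_null (signDisagreement_inter_subset (sin_pos_of_pos_of_lt_pi hb (by linarith))
      (sin_pos_of_pos_of_lt_pi ha (by linarith)) (sin_nonneg_of_nonneg_of_le_pi (by linarith) hab)
      (sin_smul_add_sin_smul_planeDir _ _ a b))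
      (measure_orthogonal_span_singleton_eq_zero hμ h0 (ne_zero_of_norm_ne_zero (by simp [he₁])))
  have hrot : μ (signDisagreement (planeDir e₁ e₂ a) (planeDir e₁ e₂ (a + b))) =
      μ (signDisagreement e₁ (planeDir e₁ e₂ b)) := by
    have hnorm := norm_planeDir he₁ he₂ he
    refine measure_signDisagreement_congr hμ (by rw [hnorm, he₁]) (by rw [hnorm, hnorm]) ?_
    rw [inner_planeDir_planeDir he₁ he₂ he, add_sub_cancel_left, inner_planeDir he₁ he₂ he]
  rw [← symmDiff_signDisagreement e₁ (planeDir e₁ e₂ a), hnull.measure_symmDiff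
    (measurableSet_signDisagreement _ _).nullMeasurableSet, hrot]

theorem measure_signDisagreement_planeDir {θ : ℝ} (hθ₀ : 0 ≤ θ) (hθπ : θ ≤ π) :
    μ (signDisagreement e₁ (planeDir e₁ e₂ θ)) = ENNReal.ofReal (θ / π) := by
  set g : ℝ → ℝ := fun t => (μ (signDisagreement e₁ (planeDir e₁ e₂ t))).toReal
  have hgπ : g π = 1 := by
    simp [g, planeDir_pi, measure_signDisagreement_neg hμ h0 (ne_zero_of_norm_ne_zero
      (by simp [he₁] : ‖e₁‖ ≠ 0))]
  have hadd : ∀ a b, 0 < a → 0 < b → a + b ≤ π → g (a + b) = g a + g b := fun a b ha hb hab => by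
    simp only [g]
    rw [measure_signDisagreement_planeDir_add he₁ he₂ he hμ h0 ha hb hab,
      ENNReal.toReal_add (measure_ne_top _ _) (measure_ne_top _ _)]
  rw [← eq_div_of_map_add_of_nonneg pi_pos (by simp [g]) hgπ (fun _ _ => ENNReal.toReal_nonneg)
    hadd hθ₀ hθπ, ENNReal.ofReal_toReal (measure_ne_top _ _)]

end Plane

theorem measure_signDisagreement_eq_arccos {E : Type*} [NormedAddCommGroup E]
    [InnerProductSpace ℝ E] [FiniteDimensional ℝ E] [MeasurableSpace E] [OpensMeasurableSpace E]
    {μ : Measure E} [IsProbabilityMeasure μ] (hμ : ∀ f : E ≃ₗᵢ[ℝ] E, MeasurePreserving f μ μ)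
    (h0 : μ {0} = 0) (hE : 2 ≤ finrank ℝ E) {v₁ v₂ : E} (hv₁ : ‖v₁‖ = 1) (hv₂ : ‖v₂‖ = 1) :
    μ (signDisagreement v₁ v₂) = ENNReal.ofReal (arccos ⟪v₁, v₂⟫ / π) := by
  set b := stdOrthonormalBasis ℝ E
  have he₁ : ‖b ⟨0, by omega⟩‖ = 1 := b.orthonormal.1 _
  have he₂ : ‖b ⟨1, by omega⟩‖ = 1 := b.orthonormal.1 _
  have he : ⟪b ⟨0, by omega⟩, b ⟨1, by omega⟩⟫ = 0 := b.orthonormal.2 (by simp)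
  have hc := abs_le.mp ((abs_real_inner_le_norm v₁ v₂).trans_eq (by rw [hv₁, hv₂, one_mul]))
  rw [measure_signDisagreement_congr hμ (hv₁.trans he₁.symm)
    (hv₂.trans (norm_planeDir he₁ he₂ he _).symm)
    (by rw [inner_planeDir he₁ he₂ he, cos_arccos hc.1 hc.2]),
    measure_signDisagreement_planeDir he₁ he₂ he hμ h0 (arccos_nonneg _) (arccos_le_pi _)]

theorem stmt_7 {d : ℕ} (hd : 2 ≤ d) (μ : Measure (EuclideanSpace ℝ (Fin d)))
    (hμ : IsUniformOnSphere μ)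
    (v₁ v₂ : EuclideanSpace ℝ (Fin d)) (hv₁ : ‖v₁‖ = 1) (hv₂ : ‖v₂‖ = 1) :
    μ {x | rsign ⟪v₁, x⟫ ≠ rsign ⟪v₂, x⟫} =
      ENNReal.ofReal (Real.arccos ⟪v₁, v₂⟫ / Real.pi) := by
  obtain ⟨_, hsphere, hinv⟩ := hμ
  exact measure_signDisagreement_eq_arccos (fun f => ⟨f.continuous.measurable, hinv f⟩)
    (measure_mono_null (by simp) hsphere) (by simpa using hd) hv₁ hv₂
end

section
/- Let u, v be unit vectors in ℝ^d (d ≥ 4) with angle θ = arccos(u·v) ∈ [0, 9π/10], and 0 ≤ ξ ≤ θ/(4√d). Let x be uniform on {x ∈ S^{d-1} : v · x = ξ}. Then E[(u · x)²] ≤ 5θ²/d. -/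
open MeasureTheory
open scoped RealInnerProductSpace

/-- The uniform probability distribution on the slice `{x ∈ S^{d-1} : v·x = ξ}`:
a probability measure concentrated on the slice that is invariant under every
linear isometry of `ℝ^d` fixing `v`. -/
def IsUniformOnSlice {d : ℕ} (v : EuclideanSpace ℝ (Fin d)) (ξ : ℝ)
    (μ : Measure (EuclideanSpace ℝ (Fin d))) : Prop :=
  IsProbabilityMeasure μ ∧ μ {x | ‖x‖ = 1 ∧ ⟪v, x⟫ = ξ}ᶜ = 0 ∧
    ∀ f : EuclideanSpace ℝ (Fin d) ≃ₗᵢ[ℝ] EuclideanSpace ℝ (Fin d),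
      f v = v → Measure.map (⇑f) μ = μ

/-!
Write `u = ⟪v, u⟫ v + w` with `w ⊥ v`, so that `⟪u, x⟫ = ⟪v, u⟫ ξ + ⟪w, x⟫` on the slice.
Reflections fixing `v` show that `⟪w, x⟫` has mean zero and that its second moment depends only
on `‖w‖`. Completing `v` to an orthonormal basis, Parseval says the second moments of the other
`d - 1` basis vectors add up to `1 - ξ²`, whence `E⟪w, x⟫² = ‖w‖² (1 - ξ²) / (d - 1)`. Thus
`E⟪u, x⟫² = cos²θ ξ² + sin²θ (1 - ξ²) / (d - 1) ≤ ξ² + θ² / (d - 1)`, and `ξ² ≤ θ² / (16 d)`.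
-/

open Finset Submodule

lemma exists_orthonormalBasis_apply_eq {E ι : Type*} [NormedAddCommGroup E]
    [InnerProductSpace ℝ E] [FiniteDimensional ℝ E] [Fintype ι]
    (hcard : Module.finrank ℝ E = Fintype.card ι) {v : E} (hv : ‖v‖ = 1) (i₀ : ι) :
    ∃ b : OrthonormalBasis ι ℝ E, b i₀ = v := by
  have hon : Orthonormal ℝ (({i₀} : Set ι).domRestrict fun _ => v) :=
    ⟨fun _ => hv, fun i j hij => absurd (Subsingleton.elim i j) hij⟩
  obtain ⟨b, hb⟩ := hon.exists_orthonormalBasis_extension_of_card_eq hcard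
  exact ⟨b, hb i₀ rfl⟩

namespace IsUniformOnSlice

variable {d : ℕ} {v : EuclideanSpace ℝ (Fin d)} {ξ : ℝ}
  {μ : Measure (EuclideanSpace ℝ (Fin d))}

lemma ae_mem (hμ : IsUniformOnSlice v ξ μ) : ∀ᵐ x ∂μ, ‖x‖ = 1 ∧ ⟪v, x⟫ = ξ :=
  ae_iff.2 hμ.2.1

lemma integral_comp (hμ : IsUniformOnSlice v ξ μ)
    (f : EuclideanSpace ℝ (Fin d) ≃ₗᵢ[ℝ] EuclideanSpace ℝ (Fin d)) (hf : f v = v)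
    (g : EuclideanSpace ℝ (Fin d) → ℝ) : ∫ x, g (f x) ∂μ = ∫ x, g x ∂μ := by
  conv_rhs => rw [← hμ.2.2 f hf]
  exact (f.toHomeomorph.measurableEmbedding.integral_map g).symm

lemma integrable_inner_pow (hμ : IsUniformOnSlice v ξ μ) (w : EuclideanSpace ℝ (Fin d))
    (n : ℕ) : Integrable (fun x => ⟪w, x⟫ ^ n) μ := by
  have := hμ.1
  refine Integrable.mono' (integrable_const (‖w‖ ^ n)) (by fun_prop) ?_
  filter_upwards [hμ.ae_mem] with x hx
  rw [norm_pow]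
  gcongr
  simpa [hx.1] using norm_inner_le_norm (𝕜 := ℝ) w x

/-- The reflection in the hyperplane orthogonal to `w₁ - w₂` fixes `v` and swaps `w₁` and `w₂`. -/
lemma integral_comp_inner_eq_of_norm_eq (hμ : IsUniformOnSlice v ξ μ)
    {w₁ w₂ : EuclideanSpace ℝ (Fin d)} (h₁ : ⟪v, w₁⟫ = 0) (h₂ : ⟪v, w₂⟫ = 0)
    (hw : ‖w₁‖ = ‖w₂‖) (g : ℝ → ℝ) : ∫ x, g ⟪w₁, x⟫ ∂μ = ∫ x, g ⟪w₂, x⟫ ∂μ := by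
  set R := reflection (ℝ ∙ (w₁ - w₂))ᗮ
  have hRv : R v = v := reflection_mem_subspace_eq_self <|
    mem_orthogonal_singleton_iff_inner_right.2 <| by
      rw [inner_sub_left, real_inner_comm, h₁, real_inner_comm, h₂, sub_zero]
  have hR : ∀ x, ⟪w₁, R x⟫ = ⟪w₂, x⟫ := fun x => by
    rw [← R.inner_map_map w₁ (R x), reflection_sub hw, reflection_reflection]
  rw [← hμ.integral_comp R hRv (fun x => g ⟪w₁, x⟫)]
  simp_rw [hR]

lemma integral_inner_eq_zero (hμ : IsUniformOnSlice v ξ μ) {w : EuclideanSpace ℝ (Fin d)}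
    (hw : ⟪v, w⟫ = 0) : ∫ x, ⟪w, x⟫ ∂μ = 0 := by
  have h := hμ.integral_comp_inner_eq_of_norm_eq hw (by rw [inner_neg_right, hw, neg_zero])
    (norm_neg w).symm id
  simp only [id, inner_neg_left, integral_neg] at h
  linarith

lemma integral_inner_sq_eq_norm_sq_mul (hμ : IsUniformOnSlice v ξ μ)
    {w b : EuclideanSpace ℝ (Fin d)} (hw : ⟪v, w⟫ = 0) (hb : ⟪v, b⟫ = 0) (hb₁ : ‖b‖ = 1) :
    ∫ x, ⟪w, x⟫ ^ 2 ∂μ = ‖w‖ ^ 2 * ∫ x, ⟪b, x⟫ ^ 2 ∂μ := by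
  rw [hμ.integral_comp_inner_eq_of_norm_eq (w₂ := ‖w‖ • b) hw
    (by rw [inner_smul_right, hb, mul_zero]) (by rw [norm_smul, hb₁, norm_norm, mul_one])
    (· ^ 2)]
  simp_rw [real_inner_smul_left, mul_pow]
  exact integral_const_mul _ _

lemma sum_integral_inner_sq_erase (hμ : IsUniformOnSlice v ξ μ) {ι : Type*} [Fintype ι]
    [DecidableEq ι] (b : OrthonormalBasis ι ℝ (EuclideanSpace ℝ (Fin d))) {i₀ : ι}
    (hb : b i₀ = v) : ∑ i ∈ univ.erase i₀, ∫ x, ⟪b i, x⟫ ^ 2 ∂μ = 1 - ξ ^ 2 := by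
  have := hμ.1
  rw [← integral_finsetSum _ fun i _ => hμ.integrable_inner_pow (b i) 2]
  calc _ = ∫ _, 1 - ξ ^ 2 ∂μ := integral_congr_ae <| by
          filter_upwards [hμ.ae_mem] with x hx
          rw [sum_erase_eq_sub (mem_univ i₀), b.sum_sq_inner_right, hb, hx.1, hx.2, one_pow]
    _ = 1 - ξ ^ 2 := by simp

lemma integral_inner_sq_of_inner_eq_zero (hμ : IsUniformOnSlice v ξ μ) (hd : 2 ≤ d)
    (hv : ‖v‖ = 1) {w : EuclideanSpace ℝ (Fin d)} (hw : ⟪v, w⟫ = 0) :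
    ∫ x, ⟪w, x⟫ ^ 2 ∂μ = ‖w‖ ^ 2 * (1 - ξ ^ 2) / (d - 1) := by
  obtain ⟨n, rfl⟩ : ∃ n, d = n + 2 := ⟨d - 2, by omega⟩
  obtain ⟨b, hb⟩ := exists_orthonormalBasis_apply_eq (by simp) hv (0 : Fin (n + 2))
  have horth : ∀ i ≠ 0, ⟪v, b i⟫ = 0 := fun i hi => hb ▸ b.orthonormal.2 hi.symm
  have hmoment : ∀ i ∈ univ.erase 0, ∫ x, ⟪b i, x⟫ ^ 2 ∂μ = ∫ x, ⟪b 1, x⟫ ^ 2 ∂μ := by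
    intro i hi
    rw [hμ.integral_inner_sq_eq_norm_sq_mul (horth i (ne_of_mem_erase hi))
      (horth 1 one_ne_zero) (b.orthonormal.1 1), b.orthonormal.1 i, one_pow, one_mul]
  have hsum := hμ.sum_integral_inner_sq_erase b hb
  rw [sum_congr rfl hmoment, sum_const, card_erase_of_mem (mem_univ _), card_univ,
    Fintype.card_fin, nsmul_eq_mul] at hsum
  have hcast : ((n + 2 : ℕ) : ℝ) - 1 = (n + 2 - 1 : ℕ) := by push_cast; ring
  rw [hμ.integral_inner_sq_eq_norm_sq_mul hw (horth 1 one_ne_zero) (b.orthonormal.1 1), ← hsum,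
    hcast, mul_div_assoc, mul_div_cancel_left₀ _ (Nat.cast_ne_zero.2 (by omega))]

theorem integral_inner_sq (hμ : IsUniformOnSlice v ξ μ) (hd : 2 ≤ d) (hv : ‖v‖ = 1)
    (u : EuclideanSpace ℝ (Fin d)) :
    ∫ x, ⟪u, x⟫ ^ 2 ∂μ =
      ⟪v, u⟫ ^ 2 * ξ ^ 2 + (‖u‖ ^ 2 - ⟪v, u⟫ ^ 2) * (1 - ξ ^ 2) / (d - 1) := by
  have := hμ.1
  set c := ⟪v, u⟫
  set w := u - c • v
  have hw : ⟪v, w⟫ = 0 := by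
    rw [inner_sub_right, inner_smul_right, real_inner_self_eq_norm_sq, hv]
    ring
  have hnorm : ‖w‖ ^ 2 = ‖u‖ ^ 2 - c ^ 2 := by
    rw [norm_sub_sq_real, inner_smul_right, real_inner_comm, norm_smul, hv, Real.norm_eq_abs]
    nlinarith [sq_abs c]
  have hae : ∀ᵐ x ∂μ, ⟪u, x⟫ ^ 2 = (c * ξ) ^ 2 + 2 * c * ξ * ⟪w, x⟫ + ⟪w, x⟫ ^ 2 := by
    filter_upwards [hμ.ae_mem] with x hx
    rw [← add_sub_cancel (c • v) u, inner_add_left, real_inner_smul_left, hx.2]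
    ring
  have hint : Integrable (fun x => ⟪w, x⟫) μ := by simpa using hμ.integrable_inner_pow w 1
  have hlin : Integrable (fun x => (c * ξ) ^ 2 + 2 * c * ξ * ⟪w, x⟫) μ :=
    (integrable_const _).add (hint.const_mul _)
  rw [integral_congr_ae hae, integral_add hlin (hμ.integrable_inner_pow w 2),
    integral_add (integrable_const _) (hint.const_mul _),
    integral_const, integral_const_mul, hμ.integral_inner_eq_zero hw,
    hμ.integral_inner_sq_of_inner_eq_zero hd hv hw, hnorm]
  simp only [probReal_univ, smul_eq_mul, one_mul, mul_zero, add_zero]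
  ring

end IsUniformOnSlice

theorem stmt_13_general (d : ℕ) (hd : 4 ≤ d)
    (u v : EuclideanSpace ℝ (Fin d)) (hu : ‖u‖ = 1) (hv : ‖v‖ = 1)
    (θ : ℝ) (hθ : θ = Real.arccos ⟪u, v⟫)
    (ξ : ℝ) (hξ0 : 0 ≤ ξ) (hξ : ξ ≤ θ / (4 * Real.sqrt d))
    (μ : Measure (EuclideanSpace ℝ (Fin d))) (hμ : IsUniformOnSlice v ξ μ) :
    ∫ x, ⟪u, x⟫ ^ 2 ∂μ ≤ 5 * θ ^ 2 / d := by
  have hd' : (4 : ℝ) ≤ d := by exact_mod_cast hd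
  have huv : |⟪u, v⟫| ≤ 1 := by simpa [hu, hv] using abs_real_inner_le_norm u v
  have hcos : ⟪v, u⟫ = Real.cos θ := by
    rw [real_inner_comm, hθ, Real.cos_arccos (abs_le.1 huv).1 (abs_le.1 huv).2]
  have hξθ : ξ ^ 2 ≤ θ ^ 2 / (16 * d) := by
    calc ξ ^ 2 ≤ (θ / (4 * Real.sqrt d)) ^ 2 := pow_le_pow_left₀ hξ0 hξ 2
      _ = θ ^ 2 / (16 * d) := by rw [div_pow, mul_pow, Real.sq_sqrt (by positivity)]; norm_num
  rw [hμ.integral_inner_sq (by omega) hv, hcos, hu, one_pow, ← Real.sin_sq]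
  calc Real.cos θ ^ 2 * ξ ^ 2 + Real.sin θ ^ 2 * (1 - ξ ^ 2) / (d - 1)
      ≤ ξ ^ 2 + θ ^ 2 / (d - 1) := by
        refine add_le_add (mul_le_of_le_one_left (sq_nonneg ξ) (Real.cos_sq_le_one θ)) ?_
        refine div_le_div_of_nonneg_right ?_ (by linarith)
        exact (mul_le_of_le_one_right (sq_nonneg _) (sub_le_self 1 (sq_nonneg ξ))).trans
          Real.sin_sq_le_sq
    _ ≤ θ ^ 2 / (16 * d) + θ ^ 2 / (d - 1) := by gcongr
    _ ≤ 5 * θ ^ 2 / d := by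
        rw [div_add_div _ _ (by positivity) (by linarith),
          div_le_div_iff₀ (by nlinarith) (by positivity)]
        nlinarith [mul_nonneg (sq_nonneg θ) (by nlinarith : (0 : ℝ) ≤ d * (63 * d - 79))]

theorem stmt_13 (d : ℕ) (hd : 4 ≤ d)
    (u v : EuclideanSpace ℝ (Fin d)) (hu : ‖u‖ = 1) (hv : ‖v‖ = 1)
    (θ : ℝ) (hθ : θ = Real.arccos ⟪u, v⟫) (hθub : θ ≤ 9 * Real.pi / 10)
    (ξ : ℝ) (hξ0 : 0 ≤ ξ) (hξ : ξ ≤ θ / (4 * Real.sqrt d))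
    (μ : Measure (EuclideanSpace ℝ (Fin d))) (hμ : IsUniformOnSlice v ξ μ) :
    ∫ x, ⟪u, x⟫ ^ 2 ∂μ ≤ 5 * θ ^ 2 / d :=
  stmt_13_general d hd u v hu hv θ hθ ξ hξ0 hξ μ hμ
end

section
/- Let w_t, u be unit vectors in ℝ^d with θ_t = arccos(w_t · u), let 0 < c̃, ζ < 1, b = c̃ζθ/√d ≤ 1 with θ_t ≤ (5/3)θ and θ ≤ π, and let x_t be any unit vector with w_t · x_t ∈ [b/2, b]. If w_{t+1} = w_t - 2·𝟙{y_t (w_t·x_t) < 0}·(w_t·x_t)·x_t for some y_t ∈ {-1,+1} and θ_{t+1} = arccos(w_{t+1} · u), then |cos θ_{t+1} - cos θ_t| ≤ 16 c̃ ζ θ² / (3√d). -/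
set_option maxHeartbeats 1000000


open scoped RealInnerProductSpace

theorem stmt_15 {d : ℕ} (hd : 1 ≤ d)
    (w u x : EuclideanSpace ℝ (Fin d))
    (hw : ‖w‖ = 1) (hu : ‖u‖ = 1) (hx : ‖x‖ = 1)
    (c ζ θ b : ℝ) (hc0 : 0 < c) (hc1 : c < 1) (hζ0 : 0 < ζ) (hζ1 : ζ < 1)
    (hθ0 : 0 ≤ θ) (hθπ : θ ≤ Real.pi)
    (hb : b = c * ζ * θ / Real.sqrt d) (hb1 : b ≤ 1)
    (hθt : Real.arccos ⟪w, u⟫ ≤ 5 / 3 * θ)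
    (hband : ⟪w, x⟫ ∈ Set.Icc (b / 2) b)
    (y : ℝ) (hy : y = 1 ∨ y = -1) :
    |⟪w - (2 * (if y * ⟪w, x⟫ < 0 then (1 : ℝ) else 0) * ⟪w, x⟫) • x, u⟫ - ⟪w, u⟫| ≤
      16 * c * ζ * θ ^ 2 / (3 * Real.sqrt d) := by
  have hsd : (1:ℝ) ≤ Real.sqrt d := by
    rw [show (1:ℝ) = Real.sqrt 1 by simp]
    exact Real.sqrt_le_sqrt (by exact_mod_cast hd)
  have hsd0 : (0:ℝ) < Real.sqrt d := lt_of_lt_of_le one_pos hsd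
  set s := ⟪w, x⟫ with hs
  obtain ⟨hs1, hs2⟩ := hband
  have hb0 : 0 ≤ b := by
    rw [hb]; positivity
  have hbθ : b ≤ θ := by
    rw [hb, div_le_iff₀ hsd0]
    have hcz : c * ζ ≤ 1 := by nlinarith
    have h1 : c * ζ * θ ≤ θ := by nlinarith [mul_le_mul_of_nonneg_right hcz hθ0]
    nlinarith [mul_le_mul_of_nonneg_left hsd hθ0]
  -- cos bound: |⟪w,u⟫| ≤ 1
  have hwu : |⟪w, u⟫| ≤ 1 := by
    calc |⟪w, u⟫| ≤ ‖w‖ * ‖u‖ := abs_real_inner_le_norm w u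
    _ = 1 := by rw [hw, hu]; ring
  set α := Real.arccos ⟪w, u⟫ with hα
  have hα0 : 0 ≤ α := Real.arccos_nonneg _
  have hcosα : Real.cos α = ⟪w, u⟫ :=
    Real.cos_arccos (by linarith [abs_le.1 hwu |>.1]) (by linarith [abs_le.1 hwu |>.2])
  -- ‖u - w‖ ≤ α
  have hnsq : ‖u - w‖ ^ 2 = 2 - 2 * ⟪w, u⟫ := by
    rw [norm_sub_sq_real, hu, hw, real_inner_comm]; ring
  have hcosge : 1 - α ^ 2 / 2 ≤ Real.cos α := Real.one_sub_sq_div_two_le_cos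
  have hnle : ‖u - w‖ ≤ α := by
    nlinarith [norm_nonneg (u - w), hnsq, hcosα, hcosge]
  -- |⟪x,u⟫| ≤ b + α
  have hxu : |⟪x, u⟫| ≤ b + α := by
    have h1 : ⟪x, u⟫ = s + ⟪u - w, x⟫ := by
      rw [inner_sub_left, hs, real_inner_comm x u]; ring
    have h2 : |⟪u - w, x⟫| ≤ ‖u - w‖ := by
      calc |⟪u - w, x⟫| ≤ ‖u - w‖ * ‖x‖ := abs_real_inner_le_norm _ _
      _ = ‖u - w‖ := by rw [hx]; ring
    rw [h1]
    calc |s + ⟪u - w, x⟫| ≤ |s| + |⟪u - w, x⟫| := abs_add_le _ _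
    _ ≤ b + α := by
        have : |s| ≤ b := abs_le.2 ⟨by linarith, hs2⟩
        linarith
  set ind := (if y * s < 0 then (1:ℝ) else 0) with hind
  have hind01 : ind = 0 ∨ ind = 1 := by
    rw [hind]; split <;> simp
  have hdiff : ⟪w - (2 * ind * s) • x, u⟫ - ⟪w, u⟫ = -(2 * ind * s) * ⟪x, u⟫ := by
    rw [inner_sub_left, real_inner_smul_left]; ring
  rw [hdiff, abs_mul]
  have hbnd : |-(2 * ind * s)| ≤ 2 * b := by
    rcases hind01 with h | h <;> rw [h]
    · simp; linarith
    · rw [abs_le]; constructor <;> nlinarith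
  have key : |-(2 * ind * s)| * |⟪x, u⟫| ≤ 2 * b * (b + α) :=
    mul_le_mul hbnd hxu (abs_nonneg _) (by linarith)
  refine key.trans ?_
  have hrhs : 16 * c * ζ * θ ^ 2 / (3 * Real.sqrt d) = 16 / 3 * b * θ := by
    rw [hb]; field_simp
  rw [hrhs]
  nlinarith [mul_le_mul_of_nonneg_left hbθ hb0, mul_le_mul_of_nonneg_left hθt hb0]
end

section
/- For any 0 < γ ≤ 1/2 and integer d ≥ 1, there exists a finite set V ⊆ S^{d-1} such that (1) any two distinct w₁, w₂ ∈ V satisfy arccos(w₁ · w₂) ≥ πγ, and (2) |V| ≥ (√d/2)·(1/(2πγ))^{d-1} - 1. -/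
/-!
Let θ = πγ and take a maximal family `V` of unit vectors whose pairwise inner products are
`< cos θ`, i.e. a maximal `√(2 - 2 cos θ)`-separated subset of the sphere for the chordal metric.
By maximality every unit vector `x` satisfies `cos θ ≤ ⟪v, x⟫` for some `v ∈ V`, and then every
`t • x` with `t ∈ [0, 1]` lies in the cylinder of radius `θ` around the segment `[0, v]`.
So the unit ball is covered by `|V|` cylinders of volume `θ ^ (d - 1) B (d - 1)`, where `B n` is
the volume of the `n`-dimensional unit ball, whence `B d ≤ |V| θ ^ (d - 1) B (d - 1)`. The
log-convexity bound `Γ (x + 1/2) ≤ √x Γ x` gives `√d B (d - 1) ≤ 2 ^ d B d`, and the two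
inequalities combine to `|V| ≥ √d / 2 · (1 / (2θ)) ^ (d - 1)`.
-/

open Real MeasureTheory Metric
open scoped RealInnerProductSpace NNReal

theorem Real.Gamma_add_half_le {x : ℝ} (hx : 0 < x) : Gamma (x + 1 / 2) ≤ √x * Gamma x := by
  have h := Gamma_mul_add_mul_le_rpow_Gamma_mul_rpow_Gamma hx (by linarith : 0 < x + 1)
    (by norm_num : (0 : ℝ) < 1 / 2) (by norm_num : (0 : ℝ) < 1 / 2) (by norm_num)
  have hΓ := (Gamma_pos_of_pos hx).le
  rw [Gamma_add_one hx.ne', ← mul_rpow hΓ (mul_nonneg hx.le hΓ), ← sqrt_eq_rpow,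
    show Gamma x * (x * Gamma x) = x * Gamma x ^ 2 by ring, sqrt_mul hx.le, sqrt_sq hΓ] at h
  convert h using 2; ring

section UnitBallVolume

noncomputable def unitBallVolume (n : ℕ) : ℝ := √π ^ n / Gamma (n / 2 + 1)

lemma unitBallVolume_pos (n : ℕ) : 0 < unitBallVolume n :=
  div_pos (pow_pos (sqrt_pos.mpr pi_pos) n) (Gamma_pos_of_pos (by positivity))

lemma sqrt_mul_unitBallVolume_le (n : ℕ) :
    √(n + 1) * unitBallVolume n ≤ 2 ^ (n + 1) * unitBallVolume (n + 1) := by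
  set x : ℝ := n / 2 + 1 with hx_def
  have hx : 0 < x := by positivity
  have hΓ : Gamma ((n + 1 : ℕ) / 2 + 1) ≤ √x * Gamma x := by
    convert Real.Gamma_add_half_le hx using 2; push_cast; ring
  have hpoly : √(n + 1) * √x ≤ 2 ^ (n + 1) := by
    rw [← sqrt_mul (by positivity)]
    calc √((n + 1) * x) ≤ √((n + 2) ^ 2) := sqrt_le_sqrt (by rw [hx_def]; nlinarith)
      _ = n + 2 := sqrt_sq (by positivity)
      _ ≤ 2 ^ (n + 1) := by exact_mod_cast Nat.lt_two_pow_self (n := n + 1)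
  have hπ : 1 ≤ √π := one_le_sqrt.mpr (by linarith [pi_gt_three])
  calc √(n + 1) * unitBallVolume n = √(n + 1) * √x * (√π ^ n / (√x * Gamma x)) := by
        rw [unitBallVolume]
        field_simp
        rw [hx_def]; ring_nf
    _ ≤ 2 ^ (n + 1) * (√π ^ (n + 1) / (√x * Gamma x)) := by
        gcongr
        omega
    _ ≤ 2 ^ (n + 1) * unitBallVolume (n + 1) := by
        rw [unitBallVolume]
        gcongr

lemma volume_closedBall_zero_euclideanSpace_fin (n : ℕ) {r : ℝ} (hr : 0 ≤ r) :
    volume (closedBall (0 : EuclideanSpace ℝ (Fin n)) r) =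
      ENNReal.ofReal r ^ n * ENNReal.ofReal (unitBallVolume n) := by
  rcases n with _ | n
  · rw [volume_euclideanSpace_eq_dirac]
    simp [unitBallVolume, hr]
  · simpa [unitBallVolume] using EuclideanSpace.volume_closedBall (Fin (n + 1)) 0 r

end UnitBallVolume

section Cylinder

variable {E F : Type*} [NormedAddCommGroup E] [InnerProductSpace ℝ E]
  [NormedAddCommGroup F] [InnerProductSpace ℝ F]

def axisCylinder (v : E) (r : ℝ) : Set E := {z | ⟪v, z⟫ ∈ Set.Icc 0 1 ∧ ‖z - ⟪v, z⟫ • v‖ ≤ r}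

lemma isClosed_axisCylinder (v : E) (r : ℝ) : IsClosed (axisCylinder v r) := by
  have hc : Continuous fun z : E ↦ ⟪v, z⟫ := continuous_const.inner continuous_id
  exact (isClosed_Icc.preimage hc).inter
    (isClosed_le ((continuous_id.sub (hc.smul continuous_const)).norm) continuous_const)

lemma LinearIsometryEquiv.preimage_axisCylinder (f : E ≃ₗᵢ[ℝ] F) (v : E) (r : ℝ) :
    f ⁻¹' axisCylinder (f v) r = axisCylinder v r := by
  ext z
  simp only [axisCylinder, Set.mem_preimage, Set.mem_ofPred_eq, f.inner_map_map]
  rw [← f.norm_map (z - ⟪v, z⟫ • v), map_sub, map_smul]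

lemma volume_axisCylinder_eq_of_norm_eq [FiniteDimensional ℝ E] [MeasurableSpace E]
    [BorelSpace E] {v w : E} (h : ‖v‖ = ‖w‖) (r : ℝ) :
    volume (axisCylinder v r) = volume (axisCylinder w r) := by
  set f := Submodule.reflection (ℝ ∙ (v - w))ᗮ
  rw [← f.preimage_axisCylinder, Submodule.reflection_sub h, f.measurePreserving.measure_preimage
    (isClosed_axisCylinder w r).measurableSet.nullMeasurableSet]

lemma volume_axisCylinder_single (n : ℕ) {r : ℝ} (hr : 0 ≤ r) :
    volume (axisCylinder (EuclideanSpace.single (0 : Fin (n + 1)) (1 : ℝ)) r) =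
      ENNReal.ofReal r ^ n * ENNReal.ofReal (unitBallVolume n) := by
  set e := (MeasurableEquiv.toLp 2 (Fin (n + 1) → ℝ)).symm.trans
    (MeasurableEquiv.piFinSuccAbove (fun _ ↦ ℝ) 0)
  have he : MeasurePreserving e :=
    (EuclideanSpace.volume_preserving_symm_measurableEquiv_toLp _).trans
      (volume_preserving_piFinSuccAbove _ 0)
  have hcyl : axisCylinder (EuclideanSpace.single (0 : Fin (n + 1)) (1 : ℝ)) r =
      e ⁻¹' (Set.Icc 0 1 ×ˢ (WithLp.toLp 2 ⁻¹' closedBall 0 r)) := by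
    ext z
    simp [axisCylinder, e, EuclideanSpace.norm_eq, Fin.sum_univ_succ,
      EuclideanSpace.inner_single_left, Fin.tail]
  rw [hcyl, he.measure_preimage_equiv, Measure.volume_eq_prod, Measure.prod_prod,
    Real.volume_Icc, (PiLp.volume_preserving_toLp _).measure_preimage
      measurableSet_closedBall.nullMeasurableSet, volume_closedBall_zero_euclideanSpace_fin n hr]
  simp

lemma norm_sub_inner_smul_sq {v : E} (hv : ‖v‖ = 1) (x : E) :
    ‖x - ⟪v, x⟫ • v‖ ^ 2 = ‖x‖ ^ 2 - ⟪v, x⟫ ^ 2 := by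
  rw [norm_sub_sq_real, inner_smul_right, norm_smul, real_inner_comm, hv, norm_eq_abs]
  ring_nf; rw [sq_abs]; ring

lemma smul_mem_axisCylinder {v x : E} (hv : ‖v‖ = 1) (hx : ‖x‖ = 1) {θ : ℝ}
    (hθ : θ ∈ Set.Icc 0 (π / 2)) (hvx : cos θ ≤ ⟪v, x⟫) {t : ℝ} (ht : t ∈ Set.Icc 0 1) :
    t • x ∈ axisCylinder v θ := by
  have hcos : 0 ≤ cos θ := cos_nonneg_of_mem_Icc ⟨by linarith [hθ.1, pi_pos], hθ.2⟩
  have hvx1 : ⟪v, x⟫ ≤ 1 := by simpa [hv, hx] using real_inner_le_norm v x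
  have hperp : ‖x - ⟪v, x⟫ • v‖ ≤ θ := by
    rw [← pow_le_pow_iff_left₀ (norm_nonneg _) hθ.1 two_ne_zero, norm_sub_inner_smul_sq hv, hx]
    nlinarith [sin_sq_le_sq (x := θ), sin_sq_add_cos_sq θ]
  refine ⟨?_, ?_⟩
  · rw [inner_smul_right]
    exact ⟨mul_nonneg ht.1 (hcos.trans hvx), mul_le_one₀ ht.2 (hcos.trans hvx) hvx1⟩
  · rw [inner_smul_right, mul_smul, ← smul_sub, norm_smul, norm_of_nonneg ht.1]
    exact (mul_le_of_le_one_left (norm_nonneg _) ht.2).trans hperp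

lemma exists_norm_eq_one_and_eq_norm_smul [Nontrivial E] (y : E) :
    ∃ x : E, ‖x‖ = 1 ∧ y = ‖y‖ • x := by
  rcases eq_or_ne y 0 with rfl | hy
  · obtain ⟨x, hx⟩ := exists_norm_eq E zero_le_one
    exact ⟨x, hx, by simp⟩
  · exact ⟨‖y‖⁻¹ • y, by simp [norm_smul, hy], by simp [smul_smul, hy]⟩

lemma closedBall_subset_biUnion_axisCylinder [Nontrivial E] {V : Finset E} {θ : ℝ}
    (hθ : θ ∈ Set.Icc 0 (π / 2)) (hV : ∀ v ∈ V, ‖v‖ = 1)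
    (hcover : ∀ x : E, ‖x‖ = 1 → ∃ v ∈ V, cos θ ≤ ⟪v, x⟫) :
    closedBall (0 : E) 1 ⊆ ⋃ v ∈ V, axisCylinder v θ := by
  intro y hy
  obtain ⟨x, hx, hyx⟩ := exists_norm_eq_one_and_eq_norm_smul y
  obtain ⟨v, hv, hvx⟩ := hcover x hx
  rw [hyx]
  exact Set.mem_biUnion hv <| smul_mem_axisCylinder (hV v hv) hx hθ hvx
    ⟨norm_nonneg _, mem_closedBall_zero_iff.mp hy⟩

end Cylinder

lemma unitBallVolume_le_card_mul {n : ℕ} {V : Finset (EuclideanSpace ℝ (Fin (n + 1)))} {θ : ℝ}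
    (hθ : θ ∈ Set.Icc 0 (π / 2)) (hV : ∀ v ∈ V, ‖v‖ = 1)
    (hcover : ∀ x : EuclideanSpace ℝ (Fin (n + 1)), ‖x‖ = 1 → ∃ v ∈ V, cos θ ≤ ⟪v, x⟫) :
    unitBallVolume (n + 1) ≤ V.card * (θ ^ n * unitBallVolume n) := by
  have hvol : ∀ v ∈ V, volume (axisCylinder v θ) = ENNReal.ofReal (θ ^ n * unitBallVolume n) :=
    fun v hv ↦ by
      rw [volume_axisCylinder_eq_of_norm_eq (w := EuclideanSpace.single 0 1) (by simp [hV v hv]),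
        volume_axisCylinder_single n hθ.1, ENNReal.ofReal_mul (pow_nonneg hθ.1 n),
        ENNReal.ofReal_pow hθ.1]
  have hB := unitBallVolume_pos n
  have hθ0 := hθ.1
  rw [← ENNReal.ofReal_le_ofReal_iff (by positivity), ENNReal.ofReal_mul (Nat.cast_nonneg _),
    ENNReal.ofReal_natCast]
  calc ENNReal.ofReal (unitBallVolume (n + 1))
      = volume (closedBall (0 : EuclideanSpace ℝ (Fin (n + 1))) 1) := by
        rw [volume_closedBall_zero_euclideanSpace_fin _ zero_le_one]; simp
    _ ≤ volume (⋃ v ∈ V, axisCylinder v θ) :=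
        measure_mono (closedBall_subset_biUnion_axisCylinder hθ hV hcover)
    _ ≤ ∑ v ∈ V, volume (axisCylinder v θ) := measure_biUnion_finset_le V _
    _ = V.card * ENNReal.ofReal (θ ^ n * unitBallVolume n) := by
        rw [Finset.sum_congr rfl hvol, Finset.sum_const, nsmul_eq_mul]

section Packing

lemma IsCompact.packingNumber_ne_top {X : Type*} [PseudoEMetricSpace X] {A : Set X}
    (hA : IsCompact A) {ε : ℝ≥0} (hε : ε ≠ 0) : packingNumber ε A ≠ ⊤ := by
  obtain ⟨N, -, hN, hNA⟩ := exists_finite_isCover_of_isCompact (ε := ε / 2) (by simpa) hA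
  refine (lt_of_le_of_lt ?_ hN.encard_lt_top).ne
  calc packingNumber ε A = packingNumber (2 * (ε / 2)) A := by rw [mul_div_cancel₀ _ two_ne_zero]
    _ ≤ externalCoveringNumber (ε / 2) A := packingNumber_two_mul_le_externalCoveringNumber _ _
    _ ≤ N.encard := hNA.externalCoveringNumber_le_encard

lemma IsCompact.exists_finset_isSeparated_isCover {X : Type*} [PseudoEMetricSpace X]
    {A : Set X} (hA : IsCompact A) {ε : ℝ≥0} (hε : ε ≠ 0) :
    ∃ V : Finset X, ↑V ⊆ A ∧ IsSeparated ε (V : Set X) ∧ IsCover ε A V := by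
  have hfin := hA.packingNumber_ne_top hε
  have hV : (maximalSeparatedSet ε A).Finite := by
    rw [← Set.encard_ne_top_iff, encard_maximalSeparatedSet hfin]; exact hfin
  exact ⟨hV.toFinset, by simpa using maximalSeparatedSet_subset,
    by simpa using isSeparated_maximalSeparatedSet,
    by simpa using isCover_maximalSeparatedSet hfin⟩

variable {E : Type*} [NormedAddCommGroup E] [InnerProductSpace ℝ E]

lemma dist_sq_eq_two_sub_two_inner {u w : E} (hu : ‖u‖ = 1) (hw : ‖w‖ = 1) :
    dist u w ^ 2 = 2 - 2 * ⟪u, w⟫ := by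
  rw [dist_eq_norm, norm_sub_sq_real, hu, hw]; ring

lemma exists_finset_unit_inner_lt_and_le [FiniteDimensional ℝ E] {c : ℝ} (hc : c < 1) :
    ∃ V : Finset E, (∀ v ∈ V, ‖v‖ = 1) ∧ (∀ u ∈ V, ∀ w ∈ V, u ≠ w → ⟪u, w⟫ < c) ∧
      ∀ x : E, ‖x‖ = 1 → ∃ v ∈ V, c ≤ ⟪v, x⟫ := by
  set ε : ℝ≥0 := ⟨√(2 - 2 * c), sqrt_nonneg _⟩
  have hε : ε ≠ 0 := by
    rw [ne_eq, ← NNReal.coe_eq_zero]; exact (sqrt_pos.mpr (by linarith)).ne'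
  have hε_sq : (ε : ℝ) ^ 2 = 2 - 2 * c := sq_sqrt (by linarith)
  obtain ⟨V, hVS, hVsep, hVcov⟩ :=
    (isCompact_sphere (0 : E) 1).exists_finset_isSeparated_isCover hε
  have hV : ∀ v ∈ V, ‖v‖ = 1 := fun v hv ↦ by simpa using hVS hv
  refine ⟨V, hV, fun u hu w hw huw ↦ ?_, fun x hx ↦ ?_⟩
  · have h : (ε : ℝ) < dist u w := by
      have : (ε : ENNReal) < edist u w := hVsep hu hw huw
      rw [edist_dist, ← ENNReal.ofReal_coe_nnreal] at this
      exact (ENNReal.ofReal_lt_ofReal_iff_of_nonneg ε.2).mp this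
    have := pow_lt_pow_left₀ h ε.2 two_ne_zero
    rw [hε_sq, dist_sq_eq_two_sub_two_inner (hV u hu) (hV w hw)] at this
    linarith
  · obtain ⟨v, hv, hxv⟩ := hVcov (x := x) (by simpa using hx)
    have h : dist x v ≤ ε := by
      replace hxv : edist x v ≤ ε := hxv
      rw [edist_dist, ← ENNReal.ofReal_coe_nnreal] at hxv
      exact (ENNReal.ofReal_le_ofReal_iff ε.2).mp hxv
    have := pow_le_pow_left₀ dist_nonneg h 2
    rw [hε_sq, dist_sq_eq_two_sub_two_inner hx (hV v hv)] at this
    exact ⟨v, hv, by rw [real_inner_comm]; linarith⟩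

end Packing

theorem stmt_16 (γ : ℝ) (hγ0 : 0 < γ) (hγ : γ ≤ 1 / 2) (d : ℕ) (hd : 1 ≤ d) :
    ∃ V : Finset (EuclideanSpace ℝ (Fin d)),
      (∀ w ∈ V, ‖w‖ = 1) ∧
      (∀ w₁ ∈ V, ∀ w₂ ∈ V, w₁ ≠ w₂ → Real.arccos ⟪w₁, w₂⟫ ≥ Real.pi * γ) ∧
      (V.card : ℝ) ≥ Real.sqrt d / 2 * (1 / (2 * Real.pi * γ)) ^ (d - 1) - 1 := by
  obtain ⟨n, rfl⟩ : ∃ n, d = n + 1 := ⟨d - 1, by omega⟩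
  set θ := π * γ
  have hθ0 : 0 < θ := mul_pos pi_pos hγ0
  have hθ : θ ∈ Set.Icc 0 (π / 2) := ⟨hθ0.le, by nlinarith [pi_pos]⟩
  have hθπ : θ ≤ π := by linarith [hθ.2, pi_pos]
  have hcos : cos θ < 1 := by simpa using cos_lt_cos_of_nonneg_of_le_pi le_rfl hθπ hθ0
  obtain ⟨V, hV, hsep, hcover⟩ :=
    exists_finset_unit_inner_lt_and_le (E := EuclideanSpace ℝ (Fin (n + 1))) hcos
  refine ⟨V, hV, fun u hu w hw huw ↦ ?_, ?_⟩
  · rw [ge_iff_le, ← arccos_cos hθ0.le hθπ]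
    exact arccos_le_arccos (hsep u hu w hw huw).le
  have hcard : √(n + 1) ≤ 2 ^ (n + 1) * θ ^ n * V.card := by
    refine le_of_mul_le_mul_right ?_ (unitBallVolume_pos n)
    calc √(n + 1) * unitBallVolume n ≤ 2 ^ (n + 1) * unitBallVolume (n + 1) :=
          sqrt_mul_unitBallVolume_le n
      _ ≤ 2 ^ (n + 1) * (V.card * (θ ^ n * unitBallVolume n)) := by
          gcongr; exact unitBallVolume_le_card_mul hθ hV hcover
      _ = 2 ^ (n + 1) * θ ^ n * V.card * unitBallVolume n := by ring
  have hbound : √(n + 1) / 2 * (1 / (2 * θ)) ^ n ≤ V.card := by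
    rw [div_pow, one_pow, mul_pow, div_mul_div_comm, mul_one, div_le_iff₀ (by positivity)]
    exact hcard.trans_eq (by ring)
  rw [Nat.add_sub_cancel, show 2 * π * γ = 2 * θ by ring]
  push_cast
  linarith
end
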